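/- Let γ ∈ [0,1), let (k_j)_{j∈ℕ} be a sequence of nonnegative real numbers with ∑_{j=0}^∞ γ^j k_j < ∞, and for each i ∈ ℕ let P_i and Q_i be probability measures on a measurable space X_i such that KL(P_{i+1} ‖ Q_{i+1}) ≤ ∑_{j=0}^{i} k_j for every i ∈ ℕ. Then ∑_{i=0}^∞ (1 − γ) γ^i · TV(P_{i+1}, Q_{i+1}) ≤ √(1 − exp(−∑_{j=0}^∞ γ^j k_j)). -/

import Mathlib

open MeasureTheory
open scoped ENNReal Classical

/-- Total variation distance between two measures:
`TV(P,Q) = sup over measurable sets E of |P(E) - Q(E)|`. -/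
noncomputable def tvDist {X : Type*} [MeasurableSpace X] (P Q : Measure X) : ℝ :=
  ⨆ E : {E : Set X // MeasurableSet E}, |(P E.1).toReal - (Q E.1).toReal|

/-- Kullback–Leibler divergence: `∫ log(dP/dQ) dP` when `P ≪ Q` (and the log-likelihood
ratio is integrable), and `+∞` otherwise. -/
noncomputable def klDiv {X : Type*} [MeasurableSpace X] (P Q : Measure X) : ℝ≥0∞ :=
  if P ≪ Q ∧ Integrable (llr P Q) P then ENNReal.ofReal (∫ x, llr P Q x ∂P) else ⊤

/-!
Bretagnolle–Huber bounds `TV(P_{i+1}, Q_{i+1})` by `φ (S i)`, where `φ t = √(1 - exp (-t))` and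
`S i = ∑_{j ≤ i} k j`. Under the probability weights `(1 - γ) γ^i` the mean of `S` is
`T = ∑ γ^j k j` (a Cauchy product with the geometric series), and `φ` is concave and
nondecreasing, so Jensen's inequality, used through a tangent line of `φ`, bounds the weighted
sum by `φ T`.

For Bretagnolle–Huber itself put `g = dQ/dP`, `m = ∫ min g 1 dP`, `M = ∫ max g 1 dP`. Then
`|P E - Q E| ≤ 1 - m` and `m + M ≤ 2`, while Jensen and Cauchy–Schwarz give
`exp (-KL) ≤ (∫ √g dP)^2 ≤ m M ≤ m (2 - m) = 1 - (1 - m)^2`.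
-/
open Real Finset Filter Topology

section BretagnolleHuber

variable {α : Type*} [MeasurableSpace α] (P Q : Measure α)

lemma lintegral_min_rnDeriv_one_add_le [IsProbabilityMeasure P] {F : Set α}
    (hF : MeasurableSet F) :
    ∫⁻ x, min (Q.rnDeriv P x) 1 ∂P + P F ≤ Q F + 1 := by
  calc ∫⁻ x, min (Q.rnDeriv P x) 1 ∂P + P F
      = ∫⁻ x in F, min (Q.rnDeriv P x) 1 ∂P + ∫⁻ x in Fᶜ, min (Q.rnDeriv P x) 1 ∂P + P F := by
        rw [lintegral_add_compl _ hF]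
    _ ≤ ∫⁻ x in F, Q.rnDeriv P x ∂P + ∫⁻ x in Fᶜ, 1 ∂P + P F := by
        gcongr <;> simp
    _ ≤ Q F + 1 := by
        rw [setLIntegral_one, add_assoc, add_comm (P Fᶜ), measure_add_measure_compl hF,
          measure_univ]
        gcongr
        exact Measure.setLIntegral_rnDeriv_le F

lemma abs_measureReal_sub_le_one_sub_lintegral_min [IsProbabilityMeasure P]
    [IsProbabilityMeasure Q] {E : Set α} (hE : MeasurableSet E) :
    |P.real E - Q.real E| ≤ 1 - (∫⁻ x, min (Q.rnDeriv P x) 1 ∂P).toReal := by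
  have hm : ∫⁻ x, min (Q.rnDeriv P x) 1 ∂P ≠ ∞ := by
    refine ne_top_of_le_ne_top ENNReal.one_ne_top ?_
    simpa using lintegral_mono (μ := P) fun x => min_le_right (Q.rnDeriv P x) 1
  have key : ∀ {F : Set α}, MeasurableSet F →
      (∫⁻ x, min (Q.rnDeriv P x) 1 ∂P).toReal + P.real F ≤ Q.real F + 1 := by
    intro F hF
    have := ENNReal.toReal_mono (by simp) (lintegral_min_rnDeriv_one_add_le P Q hF)
    rwa [ENNReal.toReal_add hm (measure_ne_top _ _), ENNReal.toReal_add (measure_ne_top _ _)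
      ENNReal.one_ne_top, ENNReal.toReal_one] at this
  have hE' := key hE.compl
  rw [probReal_compl_eq_one_sub hE, probReal_compl_eq_one_sub hE] at hE'
  rw [abs_sub_le_iff]
  constructor <;> linarith [key hE]

lemma lintegral_min_add_lintegral_max_rnDeriv_le [IsProbabilityMeasure P]
    [IsProbabilityMeasure Q] :
    ∫⁻ x, min (Q.rnDeriv P x) 1 ∂P + ∫⁻ x, max (Q.rnDeriv P x) 1 ∂P ≤ 2 := by
  have hg := Measure.measurable_rnDeriv Q P
  calc ∫⁻ x, min (Q.rnDeriv P x) 1 ∂P + ∫⁻ x, max (Q.rnDeriv P x) 1 ∂P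
      = ∫⁻ x, Q.rnDeriv P x ∂P + ∫⁻ _, 1 ∂P := by
        rw [← lintegral_add_left (hg.min measurable_const),
          ← lintegral_add_left hg]
        exact lintegral_congr fun x => min_add_max _ _
    _ ≤ Q Set.univ + P Set.univ := by
        gcongr
        · exact Measure.lintegral_rnDeriv_le
        · simp
    _ = 2 := by simp [one_add_one_eq_two]

lemma sq_lintegral_rpow_half_rnDeriv_le :
    (∫⁻ x, Q.rnDeriv P x ^ (1 / 2 : ℝ) ∂P) ^ 2 ≤
      (∫⁻ x, min (Q.rnDeriv P x) 1 ∂P) * ∫⁻ x, max (Q.rnDeriv P x) 1 ∂P := by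
  have hg := Measure.measurable_rnDeriv Q P
  have hsq : ∀ y : ℝ≥0∞, (y ^ (1 / 2 : ℝ)) ^ (2 : ℝ) = y := fun y => by
    rw [← ENNReal.rpow_mul]; norm_num
  -- Cauchy–Schwarz for `√g = √(min g 1) * √(max g 1)`
  have h := ENNReal.lintegral_mul_le_Lp_mul_Lq P Real.HolderConjugate.two_two
    ((hg.min (measurable_const (a := 1))).pow_const (1 / 2 : ℝ)).aemeasurable
    ((hg.max (measurable_const (a := 1))).pow_const (1 / 2 : ℝ)).aemeasurable
  simp only [Pi.mul_apply, ← ENNReal.mul_rpow_of_nonneg _ _ (by norm_num : (0 : ℝ) ≤ 1 / 2),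
    min_mul_max, mul_one, hsq] at h
  calc (∫⁻ x, Q.rnDeriv P x ^ (1 / 2 : ℝ) ∂P) ^ 2
      ≤ (((∫⁻ x, min (Q.rnDeriv P x) 1 ∂P) * ∫⁻ x, max (Q.rnDeriv P x) 1 ∂P) ^ (1 / 2 : ℝ))
          ^ 2 := by
        gcongr
    _ = _ := by simpa using hsq _

lemma exp_neg_integral_llr_div_two_le [IsProbabilityMeasure P] [SigmaFinite Q]
    (hac : P ≪ Q) (hint : Integrable (llr P Q) P)
    (hfin : ∫⁻ x, Q.rnDeriv P x ^ (1 / 2 : ℝ) ∂P ≠ ∞) :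
    exp (-(∫ x, llr P Q x ∂P) / 2) ≤ (∫⁻ x, Q.rnDeriv P x ^ (1 / 2 : ℝ) ∂P).toReal := by
  have hmeas : Measurable fun x => Q.rnDeriv P x ^ (1 / 2 : ℝ) :=
    (Measure.measurable_rnDeriv Q P).pow_const _
  have heq : (fun x => exp (-llr P Q x / 2)) =ᵐ[P]
      fun x => (Q.rnDeriv P x ^ (1 / 2 : ℝ)).toReal := by
    filter_upwards [exp_neg_llr hac] with x hx
    rw [← ENNReal.toReal_rpow, ← hx, ← exp_mul]
    ring_nf
  have hint' : Integrable (fun x => exp (-llr P Q x / 2)) P :=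
    (integrable_toReal_of_lintegral_ne_top hmeas.aemeasurable hfin).congr heq.symm
  calc exp (-(∫ x, llr P Q x ∂P) / 2) = exp (∫ x, -llr P Q x / 2 ∂P) := by
        rw [integral_div, integral_neg]
    _ ≤ ∫ x, exp (-llr P Q x / 2) ∂P :=
        convexOn_exp.map_integral_le continuous_exp.continuousOn isClosed_univ
          (by simp) (hint.neg.div_const 2) hint'
    _ = (∫⁻ x, Q.rnDeriv P x ^ (1 / 2 : ℝ) ∂P).toReal := by
        rw [integral_congr_ae heq, integral_toReal hmeas.aemeasurable]
        filter_upwards [Measure.rnDeriv_lt_top Q P] with x hx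
        exact ENNReal.rpow_lt_top_of_nonneg (by norm_num) hx.ne

lemma exp_neg_integral_llr_le [IsProbabilityMeasure P] [IsProbabilityMeasure Q]
    (hac : P ≪ Q) (hint : Integrable (llr P Q) P) :
    exp (-∫ x, llr P Q x ∂P) ≤ (∫⁻ x, min (Q.rnDeriv P x) 1 ∂P).toReal *
      (2 - (∫⁻ x, min (Q.rnDeriv P x) 1 ∂P).toReal) := by
  set m := ∫⁻ x, min (Q.rnDeriv P x) 1 ∂P
  set M := ∫⁻ x, max (Q.rnDeriv P x) 1 ∂P
  set B := ∫⁻ x, Q.rnDeriv P x ^ (1 / 2 : ℝ) ∂P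
  have hCS : B ^ 2 ≤ m * M := sq_lintegral_rpow_half_rnDeriv_le P Q
  have hmM : m + M ≤ 2 := lintegral_min_add_lintegral_max_rnDeriv_le P Q
  have hm : m ≠ ∞ := ne_top_of_le_ne_top ENNReal.ofNat_ne_top (le_self_add.trans hmM)
  have hM : M ≠ ∞ := ne_top_of_le_ne_top ENNReal.ofNat_ne_top (le_add_self.trans hmM)
  have hB : B ≠ ∞ := by
    have := ne_top_of_le_ne_top (ENNReal.mul_ne_top hm hM) hCS
    exact (ENNReal.pow_ne_top_iff.mp this).resolve_right two_ne_zero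
  have hCS' : B.toReal ^ 2 ≤ m.toReal * M.toReal := by
    simpa using ENNReal.toReal_mono (ENNReal.mul_ne_top hm hM) hCS
  have hmM' : m.toReal + M.toReal ≤ 2 := by
    simpa [ENNReal.toReal_add hm hM] using ENNReal.toReal_mono ENNReal.ofNat_ne_top hmM
  calc exp (-∫ x, llr P Q x ∂P) = exp (-(∫ x, llr P Q x ∂P) / 2) ^ 2 := by
        rw [← exp_nat_mul]; ring_nf
    _ ≤ B.toReal ^ 2 := by
        gcongr
        exact exp_neg_integral_llr_div_two_le P Q hac hint hB
    _ ≤ m.toReal * (2 - m.toReal) := by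
        nlinarith [ENNReal.toReal_nonneg (a := m)]

theorem abs_measureReal_sub_le_sqrt_one_sub_exp [IsProbabilityMeasure P]
    [IsProbabilityMeasure Q] (hac : P ≪ Q) (hint : Integrable (llr P Q) P) {E : Set α}
    (hE : MeasurableSet E) :
    |P.real E - Q.real E| ≤ √(1 - exp (-∫ x, llr P Q x ∂P)) := by
  have hm := abs_measureReal_sub_le_one_sub_lintegral_min P Q hE
  have hexp := exp_neg_integral_llr_le P Q hac hint
  refine abs_le_sqrt ?_
  nlinarith [abs_nonneg (P.real E - Q.real E), sq_abs (P.real E - Q.real E)]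

lemma tvDist_nonneg : 0 ≤ tvDist P Q :=
  Real.iSup_nonneg fun _ => abs_nonneg _

lemma tvDist_le_one [IsProbabilityMeasure P] [IsProbabilityMeasure Q] : tvDist P Q ≤ 1 :=
  Real.iSup_le (fun _ => abs_sub_le_of_nonneg_of_le measureReal_nonneg measureReal_le_one
    measureReal_nonneg measureReal_le_one) zero_le_one

lemma tvDist_le_sqrt_one_sub_exp_of_klDiv_le [IsProbabilityMeasure P] [IsProbabilityMeasure Q]
    {t : ℝ} (ht : 0 ≤ t) (h : klDiv P Q ≤ ENNReal.ofReal t) :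
    tvDist P Q ≤ √(1 - exp (-t)) := by
  have hfin : P ≪ Q ∧ Integrable (llr P Q) P := by
    by_contra hc
    rw [klDiv, if_neg hc, top_le_iff] at h
    exact ENNReal.ofReal_ne_top h
  rw [klDiv, if_pos hfin, ENNReal.ofReal_le_ofReal_iff ht] at h
  refine Real.iSup_le (fun E => ?_) (sqrt_nonneg _)
  refine (abs_measureReal_sub_le_sqrt_one_sub_exp P Q hfin.1 hfin.2 E.2).trans ?_
  gcongr

end BretagnolleHuber

lemma hasSum_one_sub_mul_pow_mul_sum_range {γ : ℝ} (hγ : |γ| < 1) {k : ℕ → ℝ}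
    (hk : Summable fun j => γ ^ j * k j) :
    HasSum (fun i => (1 - γ) * γ ^ i * ∑ j ∈ range (i + 1), k j) (∑' j, γ ^ j * k j) := by
  have h := hasSum_sum_range_mul_of_summable_norm hk.norm
    (summable_norm_geometric_of_norm_lt_one (by simpa using hγ))
  rw [tsum_geometric_of_abs_lt_one hγ] at h
  have h1γ : 1 - γ ≠ 0 := by linarith [le_abs_self γ]
  have hterm : ∀ i, γ ^ i * ∑ j ∈ range (i + 1), k j =
      ∑ j ∈ range (i + 1), γ ^ j * k j * γ ^ (i - j) := fun i => by
    rw [Finset.mul_sum]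
    refine Finset.sum_congr rfl fun j hj => ?_
    rw [mul_right_comm, pow_mul_pow_sub γ (by simpa [Nat.lt_succ_iff] using hj)]
  simp only [mul_assoc (1 - γ), hterm]
  rw [show ∑' j, γ ^ j * k j = (1 - γ) * ((∑' j, γ ^ j * k j) * (1 - γ)⁻¹) by field_simp]
  exact h.mul_left _

lemma tsum_mul_le_of_le_affine {ι : Type*} {w x y : ι → ℝ} {s a c T : ℝ}
    (hw0 : ∀ i, 0 ≤ w i) (hw : HasSum w 1) (hwx : HasSum (fun i => w i * x i) s)
    (hsT : s ≤ T) (hc : 0 ≤ c) (hwy : Summable fun i => w i * y i)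
    (hy : ∀ i, y i ≤ a + c * (x i - T)) :
    ∑' i, w i * y i ≤ a := by
  have h : HasSum (fun i => w i * (a + c * (x i - T))) (a + c * (s - T)) := by
    have := (hw.mul_right a).add ((hwx.sub (hw.mul_right T)).mul_left c)
    rw [one_mul, one_mul] at this
    exact this.congr_fun fun i => by ring
  calc ∑' i, w i * y i ≤ a + c * (s - T) :=
        hasSum_le (fun i => mul_le_mul_of_nonneg_left (hy i) (hw0 i)) hwy.hasSum h
    _ ≤ a := by nlinarith

lemma sqrt_one_sub_exp_neg_le_tangent {s T : ℝ} (hs : 0 ≤ s) (hT : 0 < T) :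
    √(1 - exp (-s)) ≤
      √(1 - exp (-T)) + exp (-T) / (2 * √(1 - exp (-T))) * (s - T) := by
  set a := √(1 - exp (-s))
  set b := √(1 - exp (-T))
  have hb : 0 < b := sqrt_pos.mpr (by linarith [exp_lt_one_iff.mpr (neg_lt_zero.mpr hT)])
  have ha2 : a ^ 2 = 1 - exp (-s) :=
    sq_sqrt (by linarith [exp_le_one_iff.mpr (neg_nonpos.mpr hs)])
  have hb2 : b ^ 2 = 1 - exp (-T) := sq_sqrt (by linarith [exp_lt_one_iff.mpr (neg_lt_zero.mpr hT)])
  have hexp : exp (-T) * (1 - (s - T)) ≤ exp (-s) := by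
    have := mul_le_mul_of_nonneg_left (add_one_le_exp (-(s - T))) (exp_pos (-T)).le
    rwa [← exp_add, show -T + -(s - T) = -s by ring, show -(s - T) + 1 = 1 - (s - T) by ring]
      at this
  -- `2 b (a - b) ≤ a ^ 2 - b ^ 2 = exp (-T) - exp (-s) ≤ exp (-T) (s - T)`
  rw [div_mul_eq_mul_div, ← sub_le_iff_le_add', le_div_iff₀ (by positivity)]
  nlinarith [sq_nonneg (a - b)]

/-- Bretagnolle–Huber plus geometric rearrangement plus Jensen: if
`KL(P_{i+1} ‖ Q_{i+1}) ≤ ∑_{j=0}^i k_j` with `k_j ≥ 0` and `∑ γ^j k_j < ∞`, then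
`∑ (1−γ) γ^i TV(P_{i+1}, Q_{i+1}) ≤ √(1 − exp(−∑ γ^j k_j))`. -/
theorem tsum_tv_le_sqrt_one_sub_exp {X : ℕ → Type*} [∀ i, MeasurableSpace (X i)]
    (γ : ℝ) (hγ : γ ∈ Set.Ico (0 : ℝ) 1)
    (k : ℕ → ℝ) (hk : ∀ j, 0 ≤ k j)
    (hsum : Summable fun j => γ ^ j * k j)
    (P Q : ∀ i, Measure (X i))
    [∀ i, IsProbabilityMeasure (P i)] [∀ i, IsProbabilityMeasure (Q i)]
    (hKL : ∀ i, klDiv (P (i + 1)) (Q (i + 1)) ≤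
      ENNReal.ofReal (∑ j ∈ Finset.range (i + 1), k j)) :
    ∑' i, (1 - γ) * γ ^ i * tvDist (P (i + 1)) (Q (i + 1)) ≤
      Real.sqrt (1 - Real.exp (-∑' j, γ ^ j * k j)) := by
  obtain ⟨hγ0, hγ1⟩ := hγ
  have hS : ∀ i, 0 ≤ ∑ j ∈ range (i + 1), k j := fun i => sum_nonneg fun j _ => hk j
  have hw0 : ∀ i, 0 ≤ (1 - γ) * γ ^ i := fun i =>
    mul_nonneg (sub_nonneg.mpr hγ1.le) (pow_nonneg hγ0 i)
  have hw : HasSum (fun i => (1 - γ) * γ ^ i) 1 := by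
    simpa [mul_inv_cancel₀ (sub_ne_zero.mpr hγ1.ne')] using
      (hasSum_geometric_of_lt_one hγ0 hγ1).mul_left (1 - γ)
  have hwS := hasSum_one_sub_mul_pow_mul_sum_range (abs_lt.mpr ⟨by linarith, hγ1⟩) hsum
  have hwTV : Summable fun i => (1 - γ) * γ ^ i * tvDist (P (i + 1)) (Q (i + 1)) :=
    hw.summable.of_nonneg_of_le (fun i => mul_nonneg (hw0 i) (tvDist_nonneg _ _))
      fun i => mul_le_of_le_one_right (hw0 i) (tvDist_le_one _ _)
  set T := ∑' j, γ ^ j * k j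
  have hT : 0 ≤ T := tsum_nonneg fun j => mul_nonneg (pow_nonneg hγ0 j) (hk j)
  -- The tangent-line bound needs a point `T' > 0`; take any `T' > T` and let it decrease to `T`.
  have hφ : Continuous fun t => √(1 - exp (-t)) := by fun_prop
  refine ge_of_tendsto (x := 𝓝[>] T) ((hφ.tendsto T).mono_left nhdsWithin_le_nhds)
    (eventually_nhdsWithin_of_forall fun T' hTT' => ?_)
  have hT' : 0 < T' := hT.trans_lt hTT'
  exact tsum_mul_le_of_le_affine hw0 hw hwS hTT'.le (by positivity) hwTV fun i =>
    (tvDist_le_sqrt_one_sub_exp_of_klDiv_le _ _ (hS i) (hKL i)).trans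
      (sqrt_one_sub_exp_neg_le_tangent (hS i) hT')
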